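/- arXiv:1812.11054 — 4 statements merged into one kernel-verified Lean document; each statement's English description precedes it below -/
import Mathlib

section
/- If G is a minimally rigid graph (in the Laman sense, i.e., |E(G)| = 2|V(G)| - 3 and every vertex subset X with 2 ≤ |X| ≤ |V(G)| satisfies |E[X]| ≤ 2|X| - 3), and G₁ is obtained from G by adding a new vertex v together with exactly two edges joining v to two distinct existing vertices of G, then G₁ is also minimally rigid. -/
/-- A finite simple graph given by an explicit vertex `Finset` and edge `Finset`. -/
structure FinGraph where
  verts : Finset ℕ
  edges : Finset (Sym2 ℕ)
  loopless : ∀ e ∈ edges, ¬ e.IsDiag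
  edge_mem : ∀ e ∈ edges, ∀ x ∈ e, x ∈ verts

/-- `E[X]`: the edges of `G` with both endpoints in `X`. -/
def FinGraph.inducedEdges (G : FinGraph) (X : Finset ℕ) : Finset (Sym2 ℕ) :=
  G.edges ∩ X.sym2

/-- Minimally rigid (Laman) graph. -/
def FinGraph.Laman (G : FinGraph) : Prop :=
  ((G.edges.card : ℤ) = 2 * G.verts.card - 3) ∧
  ∀ X ⊆ G.verts, 2 ≤ X.card →
    ((G.inducedEdges X).card : ℤ) ≤ 2 * X.card - 3

/-- An extension operation: add a new vertex `v` joined by exactly two edges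
to two distinct existing vertices. -/
def FinGraph.IsExtension (G G₁ : FinGraph) : Prop :=
  ∃ v r₁ r₂, v ∉ G.verts ∧ r₁ ∈ G.verts ∧ r₂ ∈ G.verts ∧ r₁ ≠ r₂ ∧
    G₁.verts = insert v G.verts ∧
    G₁.edges = insert s(v, r₁) (insert s(v, r₂) G.edges)

/-- `G` is a complete graph on two vertices. -/
def FinGraph.IsK2 (G : FinGraph) : Prop :=
  ∃ a b, a ≠ b ∧ G.verts = {a, b} ∧ G.edges = {s(a, b)}

/-! A set `X` avoiding the new vertex `v` induces the same edges in `G₁` as in `G`. If `v ∈ X`, the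
edges induced by `X` are those induced by `X \ {v}` in `G` plus at most the two new ones, and
`2 (|X| - 1) - 3 + 2 = 2 |X| - 3`. That bound is unavailable when `|X| = 2`, but two vertices span
at most one edge of any simple graph. -/

namespace FinGraph

theorem card_inducedEdges_le_one_of_card_eq_two (G : FinGraph) {X : Finset ℕ}
    (hX : X.card = 2) : (G.inducedEdges X).card ≤ 1 := by
  obtain ⟨a, b, -, rfl⟩ := Finset.card_eq_two.mp hX
  refine Finset.card_le_one.mpr fun e he f hf => ?_
  have key : ∀ e ∈ G.inducedEdges {a, b}, e = s(a, b) := by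
    intro e he
    obtain ⟨he, heX⟩ := Finset.mem_inter.mp he
    have hnd := G.loopless e he
    induction e using Sym2.ind with
    | _ x y =>
      simp only [Finset.mk_mem_sym2_iff, Finset.mem_insert, Finset.mem_singleton] at heX
      simp only [Sym2.mk_isDiag_iff] at hnd
      rcases heX with ⟨rfl | rfl, rfl | rfl⟩ <;> simp_all [Sym2.eq_swap]
  rw [key e he, key f hf]

variable {G G₁ : FinGraph} {v r₁ r₂ : ℕ}

theorem notMem_of_mem_edges (hv : v ∉ G.verts) {e : Sym2 ℕ} (he : e ∈ G.edges) : v ∉ e :=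
  fun hve => hv (G.edge_mem e he v hve)

theorem card_edges_of_extension (hv : v ∉ G.verts) (hr : r₁ ≠ r₂)
    (hedges : G₁.edges = insert s(v, r₁) (insert s(v, r₂) G.edges)) :
    G₁.edges.card = G.edges.card + 2 := by
  have h₁ : s(v, r₁) ∉ insert s(v, r₂) G.edges := by
    simp only [Finset.mem_insert, Sym2.congr_right, hr, false_or]
    exact fun h => notMem_of_mem_edges hv h (Sym2.mem_mk_left v r₁)
  have h₂ : s(v, r₂) ∉ G.edges := fun h => notMem_of_mem_edges hv h (Sym2.mem_mk_left v r₂)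
  rw [hedges, Finset.card_insert_of_notMem h₁, Finset.card_insert_of_notMem h₂]

theorem inducedEdges_erase_of_notMem_verts (hv : v ∉ G.verts) (X : Finset ℕ) :
    G.inducedEdges (X.erase v) = G.inducedEdges X := by
  ext e
  simp only [inducedEdges, Finset.mem_inter, Finset.mem_sym2_iff, Finset.mem_erase]
  exact and_congr_right fun he => forall₂_congr fun x hx =>
    and_iff_right fun hxv => notMem_of_mem_edges hv he (hxv ▸ hx)

theorem inducedEdges_eq_of_notMem (hedges : G₁.edges = insert s(v, r₁) (insert s(v, r₂) G.edges))
    {X : Finset ℕ} (hvX : v ∉ X) : G₁.inducedEdges X = G.inducedEdges X := by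
  have hnew : ∀ r, s(v, r) ∉ X.sym2 := fun r h => hvX (Finset.mk_mem_sym2_iff.mp h).1
  rw [inducedEdges, inducedEdges, hedges, Finset.insert_inter_of_notMem (hnew r₁),
    Finset.insert_inter_of_notMem (hnew r₂)]

theorem card_inducedEdges_le_of_extension
    (hedges : G₁.edges = insert s(v, r₁) (insert s(v, r₂) G.edges)) (X : Finset ℕ) :
    (G₁.inducedEdges X).card ≤ (G.inducedEdges X).card + 2 := by
  have hsub : G₁.inducedEdges X ⊆ insert s(v, r₁) (insert s(v, r₂) (G.inducedEdges X)) := by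
    intro e
    simp only [inducedEdges, hedges, Finset.mem_inter, Finset.mem_insert]
    tauto
  calc (G₁.inducedEdges X).card
      ≤ (insert s(v, r₁) (insert s(v, r₂) (G.inducedEdges X))).card := Finset.card_le_card hsub
    _ ≤ (G.inducedEdges X).card + 2 :=
        (Finset.card_insert_le _ _).trans (Nat.succ_le_succ (Finset.card_insert_le _ _))

end FinGraph

/-- a single extension of a minimally rigid graph is minimally rigid. -/
theorem extension_preserves_laman (G G₁ : FinGraph)
    (hG : G.Laman) (hext : G.IsExtension G₁) : G₁.Laman := by
  obtain ⟨v, r₁, r₂, hv, -, -, hr, hverts, hedges⟩ := hext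
  refine ⟨?_, fun X hX hX2 => ?_⟩
  · rw [FinGraph.card_edges_of_extension hv hr hedges, hverts, Finset.card_insert_of_notMem hv]
    have hGcount := hG.1
    omega
  have hY : X.erase v ⊆ G.verts := Finset.subset_insert_iff.mp (hverts ▸ hX)
  by_cases hvX : v ∈ X
  · have hXY := Finset.card_erase_add_one hvX
    rcases (by omega : X.card = 2 ∨ 2 ≤ (X.erase v).card) with hX2 | hY2
    · have hG₁X := G₁.card_inducedEdges_le_one_of_card_eq_two hX2
      omega
    · have hGY := hG.2 _ hY hY2
      have hG₁X := FinGraph.card_inducedEdges_le_of_extension hedges X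
      rw [← FinGraph.inducedEdges_erase_of_notMem_verts hv] at hG₁X
      omega
  · rw [FinGraph.inducedEdges_eq_of_notMem hedges hvX]
    exact hG.2 X (Finset.erase_eq_of_notMem hvX ▸ hY) hX2
end

section
/- A branch B(v) remains connected after removing any single vertex; i.e., every branch is 2-connected (has no cut vertex) provided it has at least 3 vertices. -/
/-- A *branch* `B(v)`: a graph built from the `K₂` on roots `r₁, r₂` by a
sequence of extensions, in which every non-root vertex has exactly two distinct
parents added strictly earlier (witnessed by `rank`), the leaf `lf = v` is the
last added vertex (nobody's parent), and every non-root non-leaf vertex has at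
least one child (so every vertex is an ancestor of the leaf). -/
structure Branch where
  verts : Finset ℕ
  r₁ : ℕ
  r₂ : ℕ
  lf : ℕ
  root_ne : r₁ ≠ r₂
  r₁_mem : r₁ ∈ verts
  r₂_mem : r₂ ∈ verts
  leaf_mem : lf ∈ verts
  leaf_ne_r₁ : lf ≠ r₁
  leaf_ne_r₂ : lf ≠ r₂
  p₁ : ℕ → ℕ
  p₂ : ℕ → ℕ
  rank : ℕ → ℕ
  parent₁_mem : ∀ x ∈ verts, x ≠ r₁ → x ≠ r₂ → p₁ x ∈ verts
  parent₂_mem : ∀ x ∈ verts, x ≠ r₁ → x ≠ r₂ → p₂ x ∈ verts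
  parents_ne : ∀ x ∈ verts, x ≠ r₁ → x ≠ r₂ → p₁ x ≠ p₂ x
  rank_lt₁ : ∀ x ∈ verts, x ≠ r₁ → x ≠ r₂ → rank (p₁ x) < rank x
  rank_lt₂ : ∀ x ∈ verts, x ≠ r₁ → x ≠ r₂ → rank (p₂ x) < rank x
  leaf_no_child : ∀ x ∈ verts, x ≠ r₁ → x ≠ r₂ → p₁ x ≠ lf ∧ p₂ x ≠ lf
  has_child : ∀ x ∈ verts, x ≠ r₁ → x ≠ r₂ → x ≠ lf →
    ∃ c ∈ verts, c ≠ r₁ ∧ c ≠ r₂ ∧ (p₁ c = x ∨ p₂ c = x)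

/-- The edge set of a branch: the root edge together with all parent-child edges. -/
def Branch.edges (B : Branch) : Finset (Sym2 ℕ) :=
  insert s(B.r₁, B.r₂)
    ((B.verts.filter (fun x => x ≠ B.r₁ ∧ x ≠ B.r₂)).biUnion
      (fun x => {s(x, B.p₁ x), s(x, B.p₂ x)}))

/-- The branch viewed as a simple graph on `ℕ`. -/
def Branch.graph (B : Branch) : SimpleGraph ℕ :=
  SimpleGraph.fromEdgeSet (B.edges : Set (Sym2 ℕ))

/-!
A non-root vertex has two distinct parents, so at least one of them differs from `t`.
Following such parents strictly decreases the rank, so every vertex other than `t` reaches a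
root without meeting `t`; the two roots are adjacent, so any two vertices other than `t` are
joined by a walk avoiding `t`.
-/

open SimpleGraph

lemma SimpleGraph.Reachable.exists_walk_support_subset {V : Type*} {G : SimpleGraph V}
    {s : Set V} {x y : V} {hx : x ∈ s} {hy : y ∈ s} (h : (G.induce s).Reachable ⟨x, hx⟩ ⟨y, hy⟩) :
    ∃ w : G.Walk x y, ∀ v ∈ w.support, v ∈ s := by
  obtain ⟨w⟩ := h
  refine ⟨w.map (Embedding.induce s).toHom, fun v hv => ?_⟩
  obtain ⟨u, -, rfl⟩ := List.mem_map.1 ((Walk.support_map _ _) ▸ hv)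
  exact u.2

namespace Branch

variable (B : Branch) {x : ℕ}

lemma adj_parent₁ (hx : x ∈ B.verts) (h₁ : x ≠ B.r₁) (h₂ : x ≠ B.r₂) :
    B.graph.Adj x (B.p₁ x) := by
  refine (fromEdgeSet_adj _).2 ⟨?_, fun h => (B.rank_lt₁ x hx h₁ h₂).ne (congrArg B.rank h).symm⟩
  simp only [edges, Finset.coe_insert, Set.mem_insert_iff, Finset.coe_biUnion]
  exact Or.inr (Set.mem_biUnion (Finset.mem_filter.2 ⟨hx, h₁, h₂⟩) (by simp))

lemma adj_parent₂ (hx : x ∈ B.verts) (h₁ : x ≠ B.r₁) (h₂ : x ≠ B.r₂) :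
    B.graph.Adj x (B.p₂ x) := by
  refine (fromEdgeSet_adj _).2 ⟨?_, fun h => (B.rank_lt₂ x hx h₁ h₂).ne (congrArg B.rank h).symm⟩
  simp only [edges, Finset.coe_insert, Set.mem_insert_iff, Finset.coe_biUnion]
  exact Or.inr (Set.mem_biUnion (Finset.mem_filter.2 ⟨hx, h₁, h₂⟩) (by simp))

lemma adj_roots : B.graph.Adj B.r₁ B.r₂ :=
  (fromEdgeSet_adj _).2 ⟨by simp [edges], B.root_ne⟩

lemma reachable_of_roots {t r r' : ℕ} (hr : r = B.r₁ ∨ r = B.r₂) (hr' : r' = B.r₁ ∨ r' = B.r₂)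
    (hrt : r ≠ t) (hrt' : r' ≠ t) :
    (B.graph.induce {t}ᶜ).Reachable ⟨r, hrt⟩ ⟨r', hrt'⟩ := by
  by_cases h : r = r'
  · subst h; rfl
  have hadj : B.graph.Adj r r' := by
    rcases hr with rfl | rfl <;> rcases hr' with rfl | rfl
    exacts [absurd rfl h, B.adj_roots, B.adj_roots.symm, absurd rfl h]
  exact (induce_adj.2 hadj).reachable

lemma exists_parent_ne (hx : x ∈ B.verts) (h₁ : x ≠ B.r₁) (h₂ : x ≠ B.r₂) (t : ℕ) :
    ∃ p ∈ B.verts, p ≠ t ∧ B.rank p < B.rank x ∧ B.graph.Adj x p := by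
  by_cases hp₁ : B.p₁ x = t
  · exact ⟨_, B.parent₂_mem x hx h₁ h₂, fun h => B.parents_ne x hx h₁ h₂ (hp₁.trans h.symm),
      B.rank_lt₂ x hx h₁ h₂, B.adj_parent₂ hx h₁ h₂⟩
  · exact ⟨_, B.parent₁_mem x hx h₁ h₂, hp₁, B.rank_lt₁ x hx h₁ h₂, B.adj_parent₁ hx h₁ h₂⟩

lemma exists_root_reachable {t : ℕ} (hx : x ∈ B.verts) (hxt : x ≠ t) :
    ∃ (r : ℕ) (hrt : r ≠ t), (r = B.r₁ ∨ r = B.r₂) ∧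
      (B.graph.induce {t}ᶜ).Reachable ⟨x, hxt⟩ ⟨r, hrt⟩ := by
  induction hn : B.rank x using Nat.strong_induction_on generalizing x with
  | _ n ih =>
  by_cases h₁ : x = B.r₁
  · exact ⟨x, hxt, Or.inl h₁, .rfl⟩
  by_cases h₂ : x = B.r₂
  · exact ⟨x, hxt, Or.inr h₂, .rfl⟩
  obtain ⟨p, hp, hpt, hlt, hadj⟩ := B.exists_parent_ne hx h₁ h₂ t
  obtain ⟨r, hrt, hr, hpr⟩ := ih _ (hn ▸ hlt) hp hpt rfl
  exact ⟨r, hrt, hr, (induce_adj.2 hadj).reachable.trans hpr⟩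

end Branch

theorem branch_two_connected_general (B : Branch) (t : ℕ) :
    ∀ x ∈ B.verts, ∀ y ∈ B.verts, x ≠ t → y ≠ t →
      ∃ w : B.graph.Walk x y, t ∉ w.support := by
  intro x hx y hy hxt hyt
  obtain ⟨r, hrt, hr, hxr⟩ := B.exists_root_reachable hx hxt
  obtain ⟨r', hrt', hr', hyr'⟩ := B.exists_root_reachable hy hyt
  obtain ⟨w, hw⟩ :=
    (hxr.trans ((B.reachable_of_roots hr hr' hrt hrt').trans hyr'.symm)).exists_walk_support_subset
  exact ⟨w, fun ht => hw t ht rfl⟩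

/-- a branch with at least 3 vertices has no cut vertex: after
removing any single vertex `t`, any two remaining vertices of the branch are
joined by a walk avoiding `t`. -/
theorem branch_two_connected (B : Branch) (h3 : 3 ≤ B.verts.card) (t : ℕ) :
    ∀ x ∈ B.verts, ∀ y ∈ B.verts, x ≠ t → y ≠ t →
      ∃ w : B.graph.Walk x y, t ∉ w.support :=
  branch_two_connected_general B t
end

section
/- (Branch Lemma) In a branch B(v) = (V_B, E_B) with roots r₁, r₂ and leaf v, there is no vertex set X such that simultaneously: (1) X is a proper subset of V_B; (2) X contains r₁, r₂, and v; and (3) |E[X]| = 2|X| - 3. -/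
namespace Branch

variable (B : Branch)

def parentEdges (x : ℕ) : Finset (Sym2 ℕ) := {s(x, B.p₁ x), s(x, B.p₂ x)}

def nonRootsIn (X : Finset ℕ) : Finset ℕ := X.filter fun x => x ≠ B.r₁ ∧ x ≠ B.r₂

def ParentClosed (X : Finset ℕ) : Prop :=
  ∀ x ∈ B.nonRootsIn X, B.p₁ x ∈ X ∧ B.p₂ x ∈ X

variable {B}

theorem card_nonRootsIn_add_two_le {X : Finset ℕ} (h₁ : B.r₁ ∈ X) (h₂ : B.r₂ ∈ X) :
    (B.nonRootsIn X).card + 2 ≤ X.card := by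
  have hsub : B.nonRootsIn X ⊆ (X.erase B.r₁).erase B.r₂ := by
    intro x hx
    simp only [nonRootsIn, Finset.mem_filter] at hx
    simp [hx.1, hx.2.1, hx.2.2]
  have h₂' : B.r₂ ∈ X.erase B.r₁ := Finset.mem_erase.mpr ⟨B.root_ne.symm, h₂⟩
  have := Finset.card_le_card hsub
  have := Finset.card_erase_add_one h₁
  have := Finset.card_erase_add_one h₂'
  omega

theorem card_parentEdges_inter_le_two (x : ℕ) (X : Finset ℕ) :
    (B.parentEdges x ∩ X.sym2).card ≤ 2 :=
  (Finset.card_le_card Finset.inter_subset_left).trans Finset.card_le_two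

theorem parents_mem_of_card_parentEdges_inter {x : ℕ} {X : Finset ℕ}
    (h : (B.parentEdges x ∩ X.sym2).card = 2) : B.p₁ x ∈ X ∧ B.p₂ x ∈ X := by
  have hall : B.parentEdges x ∩ X.sym2 = B.parentEdges x :=
    Finset.eq_of_subset_of_card_le Finset.inter_subset_left (h ▸ Finset.card_le_two)
  have hsub : B.parentEdges x ⊆ X.sym2 := Finset.inter_eq_left.mp hall
  have h₁ : s(x, B.p₁ x) ∈ B.parentEdges x := Finset.mem_insert_self _ _
  have h₂ : s(x, B.p₂ x) ∈ B.parentEdges x := Finset.mem_insert_of_mem (Finset.mem_singleton_self _)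
  exact ⟨(Finset.mk_mem_sym2_iff.mp (hsub h₁)).2, (Finset.mk_mem_sym2_iff.mp (hsub h₂)).2⟩

theorem edges_inter_sym2_subset (X : Finset ℕ) :
    B.edges ∩ X.sym2 ⊆
      insert s(B.r₁, B.r₂) ((B.nonRootsIn X).biUnion fun x => B.parentEdges x ∩ X.sym2) := by
  intro e he
  obtain ⟨heE, heX⟩ := Finset.mem_inter.mp he
  simp only [edges, Finset.mem_insert, Finset.mem_biUnion, Finset.mem_filter] at heE
  rcases heE with rfl | ⟨x, ⟨-, hx₁, hx₂⟩, hx⟩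
  · exact Finset.mem_insert_self _ _
  · have hxX : x ∈ X := by
      rcases hx with rfl | hx
      · exact (Finset.mk_mem_sym2_iff.mp heX).1
      · rw [Finset.mem_singleton.mp hx] at heX
        exact (Finset.mk_mem_sym2_iff.mp heX).1
    refine Finset.mem_insert_of_mem (Finset.mem_biUnion.mpr ⟨x, ?_, ?_⟩)
    · simp [nonRootsIn, hxX, hx₁, hx₂]
    · exact Finset.mem_inter.mpr ⟨by simpa [parentEdges] using hx, heX⟩

theorem card_edges_inter_sym2_le (X : Finset ℕ) :
    (B.edges ∩ X.sym2).card ≤ 1 + ∑ x ∈ B.nonRootsIn X, (B.parentEdges x ∩ X.sym2).card :=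
  calc (B.edges ∩ X.sym2).card
      ≤ (insert s(B.r₁, B.r₂)
          ((B.nonRootsIn X).biUnion fun x => B.parentEdges x ∩ X.sym2)).card :=
        Finset.card_le_card (edges_inter_sym2_subset X)
    _ ≤ ((B.nonRootsIn X).biUnion fun x => B.parentEdges x ∩ X.sym2).card + 1 :=
        Finset.card_insert_le _ _
    _ ≤ 1 + ∑ x ∈ B.nonRootsIn X, (B.parentEdges x ∩ X.sym2).card := by
        rw [add_comm]; exact Nat.add_le_add_left Finset.card_biUnion_le 1

/-- `E[X]` consists of the root edge and at most two parent edges per non-root vertex of `X`,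
so `|E[X]| ≥ 2|X| - 3` forces every such vertex to keep both of its parent edges. -/
theorem parentClosed_of_card_edges_ge {X : Finset ℕ} (h₁ : B.r₁ ∈ X) (h₂ : B.r₂ ∈ X)
    (hX : 2 * (X.card : ℤ) - 3 ≤ (B.edges ∩ X.sym2).card) : B.ParentClosed X := by
  have hsum_ge : ∑ _x ∈ B.nonRootsIn X, 2 ≤
      ∑ x ∈ B.nonRootsIn X, (B.parentEdges x ∩ X.sym2).card := by
    have := card_edges_inter_sym2_le (B := B) X
    have := card_nonRootsIn_add_two_le h₁ h₂
    rw [Finset.sum_const, smul_eq_mul]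
    omega
  have hsum_eq := le_antisymm
    (Finset.sum_le_sum fun x _ => card_parentEdges_inter_le_two x X) hsum_ge
  intro x hx
  exact parents_mem_of_card_parentEdges_inter
    ((Finset.sum_eq_sum_iff_of_le fun x _ => card_parentEdges_inter_le_two x X).mp hsum_eq x hx)

/-- A vertex outside `X` of maximal rank would be a non-leaf, hence have a child, which
lies outside `X` by parent-closure and has larger rank. -/
theorem verts_subset_of_parentClosed {X : Finset ℕ} (hX : B.ParentClosed X)
    (h₁ : B.r₁ ∈ X) (h₂ : B.r₂ ∈ X) (hlf : B.lf ∈ X) : B.verts ⊆ X := by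
  by_contra hsub
  obtain ⟨y, hy, hmax⟩ := (B.verts \ X).exists_max_image B.rank
    (Finset.sdiff_nonempty.mpr hsub)
  obtain ⟨hyv, hyX⟩ := Finset.mem_sdiff.mp hy
  obtain ⟨c, hcv, hc₁, hc₂, hcy⟩ := B.has_child y hyv (fun h => hyX (h ▸ h₁))
    (fun h => hyX (h ▸ h₂)) (fun h => hyX (h ▸ hlf))
  have hcX : c ∉ X := by
    intro hcX
    obtain ⟨hp₁, hp₂⟩ := hX c (by simp [nonRootsIn, hcX, hc₁, hc₂])
    rcases hcy with rfl | rfl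
    exacts [hyX hp₁, hyX hp₂]
  have hrank : B.rank y < B.rank c := by
    rcases hcy with rfl | rfl
    exacts [B.rank_lt₁ c hcv hc₁ hc₂, B.rank_lt₂ c hcv hc₁ hc₂]
  exact (hmax c (Finset.mem_sdiff.mpr ⟨hcv, hcX⟩)).not_gt hrank

end Branch

/-- Branch Lemma: in a branch `B(v)` there is no vertex set `X`
which is a proper subset of the vertices, contains both roots and the leaf `v`,
and satisfies `|E[X]| = 2|X| - 3`. -/
theorem branch_lemma (B : Branch) :
    ¬ ∃ X : Finset ℕ, X ⊂ B.verts ∧ B.r₁ ∈ X ∧ B.r₂ ∈ X ∧ B.lf ∈ X ∧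
      (((B.edges ∩ X.sym2).card : ℤ) = 2 * X.card - 3) := by
  rintro ⟨X, hXss, h₁, h₂, hlf, hcard⟩
  have hclosed := Branch.parentClosed_of_card_edges_ge h₁ h₂ hcard.ge
  exact hXss.2 (Branch.verts_subset_of_parentClosed hclosed h₁ h₂ hlf)
end

section
/- In a branch B(v) with roots r₁, r₂, removing both roots r₁ and r₂ leaves the remaining graph connected (in particular v still has a path to each of its remaining ancestors). -/
/-
Following children from a non-root vertex strictly increases the rank, so it never meets a root
and must end at the leaf, the only vertex without a child. Any two non-root vertices are thus
joined through the leaf inside `B(v) − {r₁, r₂}`.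
-/

namespace SimpleGraph

theorem Reachable.exists_walk_of_induce {V : Type*} {G : SimpleGraph V} {s : Set V} {x y : s}
    (h : (G.induce s).Reachable x y) : ∃ w : G.Walk x y, ∀ v ∈ w.support, v ∈ s := by
  obtain ⟨w⟩ := h
  refine ⟨w.map (Embedding.induce s).toHom, fun v hv => ?_⟩
  obtain ⟨u, -, rfl⟩ := List.mem_map.mp (w.support_map _ ▸ hv)
  exact u.2

end SimpleGraph

namespace Branch

variable (B : Branch)

/-- The graph `B(v) − {r₁, r₂}`. -/
def minusRoots : SimpleGraph {x | x ≠ B.r₁ ∧ x ≠ B.r₂} :=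
  B.graph.induce {x | x ≠ B.r₁ ∧ x ≠ B.r₂}

variable {B}

theorem rank_lt_of_isParent {c x : ℕ} (hc : c ∈ B.verts) (hc₁ : c ≠ B.r₁) (hc₂ : c ≠ B.r₂)
    (hx : B.p₁ c = x ∨ B.p₂ c = x) : B.rank x < B.rank c := by
  rcases hx with rfl | rfl
  · exact B.rank_lt₁ c hc hc₁ hc₂
  · exact B.rank_lt₂ c hc hc₁ hc₂

theorem graph_adj_of_isParent {c x : ℕ} (hc : c ∈ B.verts) (hc₁ : c ≠ B.r₁) (hc₂ : c ≠ B.r₂)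
    (hx : B.p₁ c = x ∨ B.p₂ c = x) : B.graph.Adj x c := by
  have hne : x ≠ c := (rank_lt_of_isParent hc hc₁ hc₂ hx).ne ∘ congrArg B.rank
  refine SimpleGraph.fromEdgeSet_adj _ |>.mpr ⟨?_, hne⟩
  simp only [edges, Finset.coe_insert, Set.mem_insert_iff, Finset.coe_biUnion, Finset.mem_coe,
    Finset.mem_filter, Set.mem_iUnion]
  right
  refine ⟨c, ⟨hc, hc₁, hc₂⟩, ?_⟩
  rcases hx with rfl | rfl <;> simp [Sym2.eq_swap]

theorem minusRoots_reachable_leaf {x : ℕ} (hx : x ∈ B.verts) (hx' : x ≠ B.r₁ ∧ x ≠ B.r₂) :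
    B.minusRoots.Reachable ⟨x, hx'⟩ ⟨B.lf, B.leaf_ne_r₁, B.leaf_ne_r₂⟩ := by
  by_cases hlf : x = B.lf
  · subst hlf
    rfl
  obtain ⟨c, hc, hc₁, hc₂, hpar⟩ := B.has_child x hx hx'.1 hx'.2 hlf
  have hadj : B.minusRoots.Adj ⟨x, hx'⟩ ⟨c, hc₁, hc₂⟩ := graph_adj_of_isParent hc hc₁ hc₂ hpar
  exact hadj.reachable.trans (minusRoots_reachable_leaf hc ⟨hc₁, hc₂⟩)
termination_by B.verts.sup B.rank - B.rank x
decreasing_by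
  have := rank_lt_of_isParent hc hc₁ hc₂ hpar
  have := Finset.le_sup (f := B.rank) hc
  omega

theorem minusRoots_reachable {x y : ℕ} (hx : x ∈ B.verts) (hy : y ∈ B.verts)
    (hx' : x ≠ B.r₁ ∧ x ≠ B.r₂) (hy' : y ≠ B.r₁ ∧ y ≠ B.r₂) :
    B.minusRoots.Reachable ⟨x, hx'⟩ ⟨y, hy'⟩ :=
  (minusRoots_reachable_leaf hx hx').trans (minusRoots_reachable_leaf hy hy').symm

end Branch

/-- removing both roots from a branch leaves the remaining graph
connected: any two non-root vertices are joined by a walk avoiding both roots. -/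
theorem branch_minus_roots_connected (B : Branch) :
    ∀ x ∈ B.verts, ∀ y ∈ B.verts, x ≠ B.r₁ → x ≠ B.r₂ → y ≠ B.r₁ → y ≠ B.r₂ →
      ∃ w : B.graph.Walk x y, B.r₁ ∉ w.support ∧ B.r₂ ∉ w.support := by
  intro x hx y hy hx₁ hx₂ hy₁ hy₂
  obtain ⟨w, hw⟩ := (Branch.minusRoots_reachable hx hy ⟨hx₁, hx₂⟩ ⟨hy₁, hy₂⟩).exists_walk_of_induce
  exact ⟨w, fun h => (hw _ h).1 rfl, fun h => (hw _ h).2 rfl⟩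
end
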